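/- arXiv:2309.02098 — 2 statements merged into one kernel-verified Lean document; each statement's English description precedes it below -/
import Mathlib

section
/- Foster–Lyapunov criterion: Let (X_k) be an irreducible Markov chain on a countable state space S. Suppose there exist a function V : S → ℝ≥0, a finite set B ⊆ S, constants ε > 0 and A < ∞, such that E[V(X_{k+1}) − V(X_k) | X_k = x] ≤ −ε for all x ∉ B and E[V(X_{k+1}) − V(X_k) | X_k = x] ≤ A for all x ∈ B. Then the Markov chain is positive recurrent. -/
open scoped ENNReal
set_option maxHeartbeats 1000000

/-- `n`-step transition law of the Markov chain with one-step kernel `K`. -/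
noncomputable def stepPMF {S : Type*} (K : S → PMF S) : ℕ → S → PMF S
  | 0, x => PMF.pure x
  | n + 1, x => (K x).bind (stepPMF K n)

/-- The chain with kernel `K` is irreducible: every state is reachable from every other. -/
def IrreducibleChain {S : Type*} (K : S → PMF S) : Prop :=
  ∀ x y : S, ∃ n : ℕ, 0 < stepPMF K n x y

/-- `firstHit K y n x` is the probability that the chain started at `x` visits `y` for the
first time exactly at time `n ≥ 1`. -/
noncomputable def firstHit {S : Type*} [DecidableEq S] (K : S → PMF S) (y : S) :
    ℕ → S → ℝ≥0∞
  | 0, _ => 0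
  | 1, x => K x y
  | n + 2, x => ∑' z : S, if z = y then 0 else K x z * firstHit K y (n + 1) z

/-- The chain is positive recurrent: the expected return time to every state is finite. -/
def PositiveRecurrent {S : Type*} [DecidableEq S] (K : S → PMF S) : Prop :=
  ∀ y : S, (∑' n : ℕ, (n : ℝ≥0∞) * firstHit K y n y) < ⊤

namespace FosterAux

variable {S : Type*} [DecidableEq S]

/-- restricted sum over states outside `Bf` -/
noncomputable def sOut (K : S → PMF S) (Bf : Finset S) (f : S → ℝ≥0∞) (x : S) : ℝ≥0∞ :=
  ∑' z, if z ∈ Bf then 0 else K x z * f z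

/-- restricted sum over states different from `y` -/
noncomputable def sNe (K : S → PMF S) (y : S) (f : S → ℝ≥0∞) (x : S) : ℝ≥0∞ :=
  ∑' z, if z = y then 0 else K x z * f z

variable {K : S → PMF S} {Bf : Finset S} {y : S}

lemma tsum_shift (f : ℕ → ℝ≥0∞) : ∑' n, f n = f 0 + ∑' n, f (n+1) :=
  tsum_eq_zero_add' ENNReal.summable

lemma sOut_congr {f g : S → ℝ≥0∞} (h : ∀ z ∉ Bf, f z = g z) (x : S) :
    sOut K Bf f x = sOut K Bf g x := by
  unfold sOut; congr 1; funext z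
  by_cases hz : z ∈ Bf
  · simp [hz]
  · simp only [hz, if_false]
    rw [h z hz]

lemma sOut_mono {f g : S → ℝ≥0∞} (h : ∀ z ∉ Bf, f z ≤ g z) (x : S) :
    sOut K Bf f x ≤ sOut K Bf g x := by
  refine ENNReal.tsum_le_tsum fun z => ?_
  by_cases hz : z ∈ Bf
  · simp [hz]
  · simp only [hz, if_false]
    exact mul_le_mul_right (h z hz) _

lemma sOut_add (f g : S → ℝ≥0∞) (x : S) :
    sOut K Bf (fun z => f z + g z) x = sOut K Bf f x + sOut K Bf g x := by
  unfold sOut; rw [← ENNReal.tsum_add]; congr 1; funext z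
  by_cases hz : z ∈ Bf <;> simp [hz, mul_add]

lemma sOut_mul (c : ℝ≥0∞) (f : S → ℝ≥0∞) (x : S) :
    sOut K Bf (fun z => c * f z) x = c * sOut K Bf f x := by
  unfold sOut; rw [← ENNReal.tsum_mul_left]; congr 1; funext z
  by_cases hz : z ∈ Bf <;> simp [hz, mul_left_comm]

lemma sOut_mul_right (c : ℝ≥0∞) (f : S → ℝ≥0∞) (x : S) :
    sOut K Bf (fun z => f z * c) x = sOut K Bf f x * c := by
  unfold sOut; rw [← ENNReal.tsum_mul_right]; congr 1; funext z
  by_cases hz : z ∈ Bf <;> simp [hz, mul_assoc]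

lemma sOut_tsum (f : ℕ → S → ℝ≥0∞) (x : S) :
    sOut K Bf (fun z => ∑' n, f n z) x = ∑' n, sOut K Bf (f n) x := by
  unfold sOut; rw [ENNReal.tsum_comm]; congr 1; funext z
  by_cases hz : z ∈ Bf <;> simp [hz, ENNReal.tsum_mul_left]

lemma sOut_finsum {ι : Type*} (t : Finset ι) (f : ι → S → ℝ≥0∞) (x : S) :
    sOut K Bf (fun z => ∑ n ∈ t, f n z) x = ∑ n ∈ t, sOut K Bf (f n) x := by
  calc sOut K Bf (fun z => ∑ n ∈ t, f n z) x
      = ∑' z, ∑ n ∈ t, (if z ∈ Bf then 0 else K x z * f n z) := by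
        unfold sOut; congr 1; funext z
        by_cases hz : z ∈ Bf <;> simp [hz, Finset.mul_sum]
    _ = ∑ n ∈ t, sOut K Bf (f n) x := Summable.tsum_finsetSum (fun i _ => ENNReal.summable)

lemma sOut_le_tsum (f : S → ℝ≥0∞) (x : S) :
    sOut K Bf f x ≤ ∑' z, K x z * f z := by
  refine ENNReal.tsum_le_tsum fun z => ?_
  by_cases hz : z ∈ Bf <;> simp [hz]

lemma tsum_split_finset (g : S → ℝ≥0∞) :
    ∑' z, g z = (∑ c ∈ Bf, g c) + ∑' z, if z ∈ Bf then 0 else g z := by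
  have h1 : ∀ z : S, g z = (if z ∈ Bf then g z else 0) + (if z ∈ Bf then 0 else g z) := by
    intro z; by_cases hz : z ∈ Bf <;> simp [hz]
  calc ∑' z, g z = ∑' z, ((if z ∈ Bf then g z else 0) + (if z ∈ Bf then 0 else g z)) := by
        congr 1; funext z; exact h1 z
    _ = (∑' z, if z ∈ Bf then g z else 0) + ∑' z, if z ∈ Bf then 0 else g z :=
        ENNReal.tsum_add
    _ = (∑ c ∈ Bf, g c) + ∑' z, if z ∈ Bf then 0 else g z := by
        congr 1
        rw [tsum_eq_sum (s := Bf) (fun b hb => by simp [hb])]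
        exact Finset.sum_congr rfl fun c hc => by simp [hc]

lemma split_K (f : S → ℝ≥0∞) (x : S) :
    ∑' z, K x z * f z = (∑ c ∈ Bf, K x c * f c) + sOut K Bf f x :=
  tsum_split_finset _

lemma split_Ky (f : S → ℝ≥0∞) (x : S) :
    ∑' z, K x z * f z = K x y * f y + sNe K y f x := by
  unfold sNe
  have h1 : ∀ z : S, K x z * f z
      = (if z = y then K x z * f z else 0) + (if z = y then 0 else K x z * f z) := by
    intro z; by_cases hz : z = y <;> simp [hz]
  calc ∑' z, K x z * f z
      = ∑' z, ((if z = y then K x z * f z else 0) + (if z = y then 0 else K x z * f z)) := by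
        congr 1; funext z; exact h1 z
    _ = (∑' z, if z = y then K x z * f z else 0) + ∑' z, (if z = y then 0 else K x z * f z) :=
        ENNReal.tsum_add
    _ = K x y * f y + ∑' z, (if z = y then 0 else K x z * f z) := by
        congr 1
        rw [tsum_eq_single y (fun z hz => by simp [hz])]
        simp

lemma sNe_mono {f g : S → ℝ≥0∞} (h : ∀ z, z ≠ y → f z ≤ g z) (x : S) :
    sNe K y f x ≤ sNe K y g x := by
  refine ENNReal.tsum_le_tsum fun z => ?_
  by_cases hz : z = y
  · simp [hz]
  · simp only [hz, if_false]
    exact mul_le_mul_right (h z hz) _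

lemma sNe_le_tsum (f : S → ℝ≥0∞) (x : S) :
    sNe K y f x ≤ ∑' z, K x z * f z := by
  refine ENNReal.tsum_le_tsum fun z => ?_
  by_cases hz : z = y <;> simp [hz]

lemma sNe_tsum (f : ℕ → S → ℝ≥0∞) (x : S) :
    sNe K y (fun z => ∑' n, f n z) x = ∑' n, sNe K y (f n) x := by
  unfold sNe; rw [ENNReal.tsum_comm]; congr 1; funext z
  by_cases hz : z = y <;> simp [hz, ENNReal.tsum_mul_left]

lemma sNe_finsum {ι : Type*} (t : Finset ι) (f : ι → S → ℝ≥0∞) (x : S) :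
    sNe K y (fun z => ∑ n ∈ t, f n z) x = ∑ n ∈ t, sNe K y (f n) x := by
  calc sNe K y (fun z => ∑ n ∈ t, f n z) x
      = ∑' z, ∑ n ∈ t, (if z = y then 0 else K x z * f n z) := by
        unfold sNe; congr 1; funext z
        by_cases hz : z = y <;> simp [hz, Finset.mul_sum]
    _ = ∑ n ∈ t, sNe K y (f n) x := Summable.tsum_finsetSum (fun i _ => ENNReal.summable)

lemma sNe_split_Bf (hyB : y ∈ Bf) (f : S → ℝ≥0∞) (x : S) :
    sNe K y f x = (∑ c ∈ Bf.erase y, K x c * f c) + sOut K Bf f x := by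
  have e1 : (∑ c ∈ Bf, if c = y then 0 else K x c * f c)
      = ∑ c ∈ Bf.erase y, K x c * f c := by
    calc (∑ c ∈ Bf, if c = y then 0 else K x c * f c)
        = ∑ c ∈ Bf.erase y, (if c = y then 0 else K x c * f c) :=
          (Finset.sum_erase _ (by simp)).symm
      _ = ∑ c ∈ Bf.erase y, K x c * f c :=
          Finset.sum_congr rfl fun c hc => by simp [Finset.ne_of_mem_erase hc]
  have e2 : (∑' z, if z ∈ Bf then 0 else (if z = y then 0 else K x z * f z))
      = sOut K Bf f x := by
    unfold sOut; congr 1; funext z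
    by_cases hz : z ∈ Bf
    · simp [hz]
    · have hzy : z ≠ y := fun h => hz (h ▸ hyB)
      simp [hz, hzy]
  calc sNe K y f x
      = (∑ c ∈ Bf, if c = y then 0 else K x c * f c)
        + ∑' z, if z ∈ Bf then 0 else (if z = y then 0 else K x z * f z) :=
        tsum_split_finset _
    _ = (∑ c ∈ Bf.erase y, K x c * f c) + sOut K Bf f x := by rw [e1, e2]

lemma sum_K_one (x : S) : (∑ c ∈ Bf, (K x c : ℝ≥0∞)) + sOut K Bf (fun _ => 1) x = 1 := by
  have := split_K (K := K) (Bf := Bf) (fun _ => (1:ℝ≥0∞)) x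
  simp only [mul_one] at this
  rw [← this, PMF.tsum_coe]

lemma sNe_one (x : S) : K x y + sNe K y (fun _ => 1) x = 1 := by
  have := split_Ky (K := K) (y := y) (fun _ => (1:ℝ≥0∞)) x
  simp only [mul_one] at this
  rw [← this, PMF.tsum_coe]

section Defs

variable (K : S → PMF S) (Bf : Finset S) (y : S)

/-- probability of staying outside `Bf` at times `1..n` -/
noncomputable def av : ℕ → S → ℝ≥0∞
  | 0, _ => 1
  | n+1, x => sOut K Bf (av n) x

/-- expected hitting time of `Bf` (counting from first step) -/
noncomputable def Gf (x : S) : ℝ≥0∞ := ∑' n, av K Bf n x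

/-- value of `V` at time `n` on the event of staying outside `Bf` -/
noncomputable def wV (V : S → ℝ≥0∞) : ℕ → S → ℝ≥0∞
  | 0, x => V x
  | n+1, x => sOut K Bf (wV V n) x

/-- first hit of `Bf` at time `n+1` landing at `c` -/
noncomputable def hd (c : S) : ℕ → S → ℝ≥0∞
  | 0, x => K x c
  | n+1, x => sOut K Bf (hd c n) x

/-- probability that the first visit to `Bf` is at `c` -/
noncomputable def hq (x c : S) : ℝ≥0∞ := ∑' n, hd K Bf c n x

/-- induced chain on `Bf`: probability of avoiding `y` for `m` induced steps -/
noncomputable def qa : ℕ → S → ℝ≥0∞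
  | 0, _ => 1
  | m+1, b => ∑ c ∈ Bf.erase y, hq K Bf b c * qa m c

/-- expected number of induced steps to reach `y` -/
noncomputable def kk (b : S) : ℝ≥0∞ := ∑' m, qa K Bf y m b

/-- probability that `y` occurs among the first `m` induced states -/
noncomputable def py : ℕ → S → ℝ≥0∞
  | 0, _ => 0
  | m+1, x => hq K Bf x y + ∑ c ∈ Bf.erase y, hq K Bf x c * py m c

/-- probability of avoiding `y` at times `1..n` -/
noncomputable def ay : ℕ → S → ℝ≥0∞
  | 0, _ => 1
  | n+1, x => sNe K y (ay n) x

/-- probability of hitting `y` within times `1..n` -/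
noncomputable def hyp : ℕ → S → ℝ≥0∞
  | 0, _ => 0
  | n+1, x => K x y + sNe K y (hyp n) x

end Defs

section Basic

variable {K : S → PMF S} {Bf : Finset S} {y : S}

lemma av_le_one : ∀ n x, av K Bf n x ≤ 1 := by
  intro n
  induction n with
  | zero => intro x; exact le_rfl
  | succ n ih =>
    intro x
    show sOut K Bf (av K Bf n) x ≤ 1
    calc sOut K Bf (av K Bf n) x ≤ sOut K Bf (fun _ => 1) x := sOut_mono (fun z _ => ih z) x
      _ ≤ ∑' z, K x z * 1 := sOut_le_tsum _ x
      _ = 1 := by simp [PMF.tsum_coe]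

lemma ay_le_one : ∀ n x, ay K y n x ≤ 1 := by
  intro n
  induction n with
  | zero => intro x; exact le_rfl
  | succ n ih =>
    intro x
    show sNe K y (ay K y n) x ≤ 1
    calc sNe K y (ay K y n) x ≤ sNe K y (fun _ => 1) x := sNe_mono (fun z _ => ih z) x
      _ ≤ ∑' z, K x z * 1 := sNe_le_tsum _ x
      _ = 1 := by simp [PMF.tsum_coe]

lemma Gf_identity (x : S) : Gf K Bf x = 1 + sOut K Bf (Gf K Bf) x := by
  unfold Gf
  rw [tsum_shift]
  congr 1
  calc ∑' n, av K Bf (n+1) x = ∑' n, sOut K Bf (av K Bf n) x := rfl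
    _ = sOut K Bf (fun z => ∑' n, av K Bf n z) x := (sOut_tsum _ x).symm

lemma hq_identity (x c : S) :
    hq K Bf x c = K x c + sOut K Bf (fun z => hq K Bf z c) x := by
  unfold hq
  rw [tsum_shift]
  congr 1
  calc ∑' n, hd K Bf c (n+1) x = ∑' n, sOut K Bf (hd K Bf c n) x := rfl
    _ = sOut K Bf (fun z => ∑' n, hd K Bf c n z) x := (sOut_tsum _ x).symm

lemma kk_identity (b : S) :
    kk K Bf y b = 1 + ∑ c ∈ Bf.erase y, hq K Bf b c * kk K Bf y c := by
  unfold kk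
  rw [tsum_shift]
  congr 1
  have : ∀ m, qa K Bf y (m+1) b = ∑ c ∈ Bf.erase y, hq K Bf b c * qa K Bf y m c :=
    fun m => rfl
  calc (∑' m, qa K Bf y (m+1) b)
      = ∑' m, ∑ c ∈ Bf.erase y, hq K Bf b c * qa K Bf y m c := by
        congr 1
    _ = ∑ c ∈ Bf.erase y, ∑' m, hq K Bf b c * qa K Bf y m c :=
        Summable.tsum_finsetSum (fun i _ => ENNReal.summable)
    _ = ∑ c ∈ Bf.erase y, hq K Bf b c * ∑' m, qa K Bf y m c := by
        exact Finset.sum_congr rfl fun c _ => ENNReal.tsum_mul_left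

lemma sOut_one_le (x : S) : sOut K Bf (fun _ => 1) x ≤ 1 := by
  calc sOut K Bf (fun _ => 1) x ≤ ∑' z, K x z * 1 := sOut_le_tsum _ x
    _ = 1 := by simp [PMF.tsum_coe]

end Basic

section PartA

variable {K : S → PMF S} {Bf : Finset S} {y : S} {V : S → ℝ≥0∞} {e : ℝ≥0∞}

lemma A1 (hout : ∀ x ∉ Bf, (∑' z, K x z * V z) + e ≤ V x) :
    ∀ n, ∀ x ∉ Bf, wV K Bf V (n+1) x + e * av K Bf (n+1) x ≤ wV K Bf V n x := by
  intro n
  induction n with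
  | zero =>
    intro x hx
    show sOut K Bf V x + e * sOut K Bf (av K Bf 0) x ≤ V x
    calc sOut K Bf V x + e * sOut K Bf (av K Bf 0) x
        ≤ (∑' z, K x z * V z) + e * 1 := by
          refine add_le_add (sOut_le_tsum _ x) (mul_le_mul_right ?_ e)
          exact sOut_one_le x
      _ = (∑' z, K x z * V z) + e := by rw [mul_one]
      _ ≤ V x := hout x hx
  | succ n ih =>
    intro x hx
    show sOut K Bf (wV K Bf V (n+1)) x + e * sOut K Bf (av K Bf (n+1)) x
        ≤ sOut K Bf (wV K Bf V n) x
    rw [← sOut_mul, ← sOut_add]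
    exact sOut_mono (fun z hz => ih z hz) x

lemma A2 (hout : ∀ x ∉ Bf, (∑' z, K x z * V z) + e ≤ V x) :
    ∀ N, ∀ x ∉ Bf, (∑ m ∈ Finset.range N, e * av K Bf (m+1) x) + wV K Bf V N x ≤ V x := by
  intro N
  induction N with
  | zero => intro x _; simp [wV]
  | succ N ih =>
    intro x hx
    have h1 := A1 hout N x hx
    calc (∑ m ∈ Finset.range (N+1), e * av K Bf (m+1) x) + wV K Bf V (N+1) x
        = (∑ m ∈ Finset.range N, e * av K Bf (m+1) x)
          + (wV K Bf V (N+1) x + e * av K Bf (N+1) x) := by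
          rw [Finset.sum_range_succ]; ring
      _ ≤ (∑ m ∈ Finset.range N, e * av K Bf (m+1) x) + wV K Bf V N x :=
          add_le_add_right h1 _
      _ ≤ V x := ih x hx

lemma Gf_out_bound (hout : ∀ x ∉ Bf, (∑' z, K x z * V z) + e ≤ V x)
    (he0 : e ≠ 0) (heT : e ≠ ⊤) :
    ∀ x ∉ Bf, Gf K Bf x ≤ 1 + e⁻¹ * V x := by
  intro x hx
  have key : ∀ N, (∑ m ∈ Finset.range N, av K Bf (m+1) x) ≤ e⁻¹ * V x := by
    intro N
    have h1 : e * ∑ m ∈ Finset.range N, av K Bf (m+1) x ≤ V x := by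
      rw [Finset.mul_sum]
      exact le_trans le_self_add (A2 hout N x hx)
    calc (∑ m ∈ Finset.range N, av K Bf (m+1) x)
        = e⁻¹ * (e * ∑ m ∈ Finset.range N, av K Bf (m+1) x) := by
          rw [← mul_assoc, ENNReal.inv_mul_cancel he0 heT, one_mul]
      _ ≤ e⁻¹ * V x := mul_le_mul_right h1 _
  have h2 : (∑' m, av K Bf (m+1) x) ≤ e⁻¹ * V x := by
    rw [ENNReal.tsum_eq_iSup_nat]
    exact iSup_le key
  unfold Gf
  rw [tsum_shift]
  exact add_le_add_right h2 1

lemma Gf_all_bound (hout : ∀ x ∉ Bf, (∑' z, K x z * V z) + e ≤ V x)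
    (he0 : e ≠ 0) (heT : e ≠ ⊤) {CA : ℝ≥0∞}
    (hall : ∀ x, (∑' z, K x z * V z) ≤ V x + CA) :
    ∀ x, Gf K Bf x ≤ 2 + e⁻¹ * (V x + CA) := by
  intro x
  have h1 : sOut K Bf (Gf K Bf) x ≤ 1 + e⁻¹ * (V x + CA) := by
    calc sOut K Bf (Gf K Bf) x
        ≤ sOut K Bf (fun z => 1 + e⁻¹ * V z) x :=
          sOut_mono (fun z hz => Gf_out_bound hout he0 heT z hz) x
      _ = sOut K Bf (fun _ => 1) x + e⁻¹ * sOut K Bf V x := by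
          rw [sOut_add (fun _ => 1) (fun z => e⁻¹ * V z), sOut_mul]
      _ ≤ 1 + e⁻¹ * (∑' z, K x z * V z) := by
          exact add_le_add (sOut_one_le x) (mul_le_mul_right (sOut_le_tsum _ x) _)
      _ ≤ 1 + e⁻¹ * (V x + CA) := add_le_add_right (mul_le_mul_right (hall x) _) 1
  calc Gf K Bf x = 1 + sOut K Bf (Gf K Bf) x := Gf_identity x
    _ ≤ 1 + (1 + e⁻¹ * (V x + CA)) := add_le_add_right h1 1
    _ = 2 + e⁻¹ * (V x + CA) := by ring

lemma Gf_fin (hout : ∀ x ∉ Bf, (∑' z, K x z * V z) + e ≤ V x)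
    (he0 : e ≠ 0) (heT : e ≠ ⊤) {CA : ℝ≥0∞} (hCA : CA ≠ ⊤)
    (hall : ∀ x, (∑' z, K x z * V z) ≤ V x + CA)
    (x : S) (hVx : V x ≠ ⊤) : Gf K Bf x < ⊤ := by
  refine lt_of_le_of_lt (Gf_all_bound hout he0 heT hall x) ?_
  have : e⁻¹ ≠ ⊤ := by simpa [ENNReal.inv_eq_top] using he0
  exact ENNReal.add_lt_top.2 ⟨by simp, ENNReal.mul_lt_top this.lt_top
    (ENNReal.add_lt_top.2 ⟨hVx.lt_top, hCA.lt_top⟩).ne.lt_top⟩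

end PartA

section Induced

variable {K : S → PMF S} {Bf : Finset S} {y : S}

lemma hd_mass : ∀ N x, (∑ n ∈ Finset.range N, ∑ c ∈ Bf, hd K Bf c n x) ≤ 1 := by
  intro N
  induction N with
  | zero => intro x; simp
  | succ N ih =>
    intro x
    rw [Finset.sum_range_succ']
    have h1 : ∀ n, (∑ c ∈ Bf, hd K Bf c (n+1) x) = sOut K Bf (fun z => ∑ c ∈ Bf, hd K Bf c n z) x := by
      intro n
      rw [sOut_finsum]
      rfl
    calc (∑ n ∈ Finset.range N, ∑ c ∈ Bf, hd K Bf c (n+1) x) + ∑ c ∈ Bf, hd K Bf c 0 x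
        = (∑ n ∈ Finset.range N, sOut K Bf (fun z => ∑ c ∈ Bf, hd K Bf c n z) x)
          + ∑ c ∈ Bf, (K x c : ℝ≥0∞) := by
          rw [Finset.sum_congr rfl (fun n _ => h1 n)]; rfl
      _ = sOut K Bf (fun z => ∑ n ∈ Finset.range N, ∑ c ∈ Bf, hd K Bf c n z) x
          + ∑ c ∈ Bf, (K x c : ℝ≥0∞) := by rw [sOut_finsum]
      _ ≤ sOut K Bf (fun _ => 1) x + ∑ c ∈ Bf, (K x c : ℝ≥0∞) :=
          add_le_add_left (sOut_mono (fun z _ => ih z) x) _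
      _ = 1 := by rw [add_comm]; exact sum_K_one x

lemma hq_mass (x : S) : (∑ c ∈ Bf, hq K Bf x c) ≤ 1 := by
  unfold hq
  rw [← Summable.tsum_finsetSum (fun c _ => ENNReal.summable)]
  rw [ENNReal.tsum_eq_iSup_nat]
  exact iSup_le fun N => hd_mass N x

lemma qa_le_one : ∀ m b, qa K Bf y m b ≤ 1 := by
  intro m
  induction m with
  | zero => intro b; exact le_rfl
  | succ m ih =>
    intro b
    show (∑ c ∈ Bf.erase y, hq K Bf b c * qa K Bf y m c) ≤ 1
    calc (∑ c ∈ Bf.erase y, hq K Bf b c * qa K Bf y m c)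
        ≤ ∑ c ∈ Bf.erase y, hq K Bf b c * 1 :=
          Finset.sum_le_sum fun c _ => mul_le_mul_right (ih c) _
      _ = ∑ c ∈ Bf.erase y, hq K Bf b c := by simp
      _ ≤ ∑ c ∈ Bf, hq K Bf b c :=
          Finset.sum_le_sum_of_subset (Finset.erase_subset _ _)
      _ ≤ 1 := hq_mass b

lemma qa_succ_le : ∀ m b, qa K Bf y (m+1) b ≤ qa K Bf y m b := by
  intro m
  induction m with
  | zero => intro b; exact qa_le_one 1 b
  | succ m ih =>
    intro b
    show (∑ c ∈ Bf.erase y, hq K Bf b c * qa K Bf y (m+1) c)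
        ≤ ∑ c ∈ Bf.erase y, hq K Bf b c * qa K Bf y m c
    exact Finset.sum_le_sum fun c _ => mul_le_mul_right (ih c) _

lemma qa_anti {m m' : ℕ} (h : m ≤ m') (b : S) : qa K Bf y m' b ≤ qa K Bf y m b := by
  induction h with
  | refl => exact le_rfl
  | step h ih => exact le_trans (qa_succ_le _ b) ih

lemma py_mono : ∀ m x, py K Bf y m x ≤ py K Bf y (m+1) x := by
  intro m
  induction m with
  | zero => intro x; exact zero_le
  | succ m ih =>
    intro x
    show hq K Bf x y + (∑ c ∈ Bf.erase y, hq K Bf x c * py K Bf y m c)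
        ≤ hq K Bf x y + ∑ c ∈ Bf.erase y, hq K Bf x c * py K Bf y (m+1) c
    exact add_le_add_right (Finset.sum_le_sum fun c _ => mul_le_mul_right (ih c) _) _

lemma qa_add_py (hyB : y ∈ Bf) : ∀ m b, qa K Bf y m b + py K Bf y m b ≤ 1 := by
  intro m
  induction m with
  | zero => intro b; simp [qa, py]
  | succ m ih =>
    intro b
    show (∑ c ∈ Bf.erase y, hq K Bf b c * qa K Bf y m c)
        + (hq K Bf b y + ∑ c ∈ Bf.erase y, hq K Bf b c * py K Bf y m c) ≤ 1
    calc (∑ c ∈ Bf.erase y, hq K Bf b c * qa K Bf y m c)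
        + (hq K Bf b y + ∑ c ∈ Bf.erase y, hq K Bf b c * py K Bf y m c)
        = hq K Bf b y + ∑ c ∈ Bf.erase y,
            (hq K Bf b c * qa K Bf y m c + hq K Bf b c * py K Bf y m c) := by
          rw [Finset.sum_add_distrib]; ring
      _ = hq K Bf b y + ∑ c ∈ Bf.erase y, hq K Bf b c * (qa K Bf y m c + py K Bf y m c) := by
          congr 1; exact Finset.sum_congr rfl fun c _ => (mul_add _ _ _).symm
      _ ≤ hq K Bf b y + ∑ c ∈ Bf.erase y, hq K Bf b c * 1 :=
          add_le_add_right (Finset.sum_le_sum fun c _ => mul_le_mul_right (ih c) _) _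
      _ = hq K Bf b y + ∑ c ∈ Bf.erase y, hq K Bf b c := by simp
      _ = ∑ c ∈ Bf, hq K Bf b c := Finset.add_sum_erase Bf _ hyB
      _ ≤ 1 := hq_mass b

lemma py_step (m : ℕ) (x : S) :
    py K Bf y (m+1) x = K x y + ((∑ c ∈ Bf.erase y, K x c * py K Bf y m c)
      + sOut K Bf (py K Bf y (m+1)) x) := by
  show hq K Bf x y + (∑ c ∈ Bf.erase y, hq K Bf x c * py K Bf y m c) = _
  have h1 : ∀ c, hq K Bf x c = K x c + sOut K Bf (fun z => hq K Bf z c) x := hq_identity x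
  calc hq K Bf x y + ∑ c ∈ Bf.erase y, hq K Bf x c * py K Bf y m c
      = (K x y + sOut K Bf (fun z => hq K Bf z y) x)
        + ∑ c ∈ Bf.erase y, (K x c + sOut K Bf (fun z => hq K Bf z c) x) * py K Bf y m c := by
        rw [← h1]
        congr 1
        exact Finset.sum_congr rfl fun c _ => by rw [← h1]
    _ = (K x y + sOut K Bf (fun z => hq K Bf z y) x)
        + ((∑ c ∈ Bf.erase y, K x c * py K Bf y m c)
          + ∑ c ∈ Bf.erase y, sOut K Bf (fun z => hq K Bf z c) x * py K Bf y m c) := by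
        rw [← Finset.sum_add_distrib]
        congr 1
        exact Finset.sum_congr rfl fun c _ => add_mul _ _ _
    _ = K x y + ((∑ c ∈ Bf.erase y, K x c * py K Bf y m c)
        + (sOut K Bf (fun z => hq K Bf z y) x
          + ∑ c ∈ Bf.erase y, sOut K Bf (fun z => hq K Bf z c * py K Bf y m c) x)) := by
        rw [Finset.sum_congr rfl (fun c _ => (sOut_mul_right (py K Bf y m c) (fun z => hq K Bf z c) x).symm)]
        ring
    _ = K x y + ((∑ c ∈ Bf.erase y, K x c * py K Bf y m c)
        + sOut K Bf (fun z => hq K Bf z y + ∑ c ∈ Bf.erase y, hq K Bf z c * py K Bf y m c) x) := by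
        rw [← sOut_finsum, ← sOut_add]
    _ = K x y + ((∑ c ∈ Bf.erase y, K x c * py K Bf y m c)
        + sOut K Bf (py K Bf y (m+1)) x) := rfl

lemma hyp_le_py (hyB : y ∈ Bf) : ∀ n x, hyp K y n x ≤ py K Bf y n x := by
  intro n
  induction n with
  | zero => intro x; exact le_rfl
  | succ n ih =>
    intro x
    show K x y + sNe K y (hyp K y n) x ≤ py K Bf y (n+1) x
    rw [py_step, sNe_split_Bf hyB]
    refine add_le_add_right (add_le_add ?_ ?_) _
    · exact Finset.sum_le_sum fun c _ => mul_le_mul_right (ih c) _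
    · exact sOut_mono (fun z _ => le_trans (ih z) (py_mono n z)) x

end Induced

section Irred

variable {K : S → PMF S} {Bf : Finset S} {y : S}

lemma stepPMF_succ_apply (n : ℕ) (x w : S) :
    stepPMF K (n+1) x w = ∑' z, K x z * stepPMF K n z w :=
  PMF.bind_apply _ _ _

lemma sNe_zero (x : S) : sNe K y (fun _ => 0) x = 0 := by
  unfold sNe
  convert tsum_zero with z
  by_cases hz : z = y <;> simp [hz]

lemma step_le_hyp : ∀ n x, stepPMF K (n+1) x y ≤ hyp K y (n+1) x := by
  intro n
  induction n with
  | zero =>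
    intro x
    have h1 : stepPMF K 1 x y = K x y := by
      rw [stepPMF_succ_apply]
      rw [tsum_eq_single y (fun z hz => ?_)]
      · show K x y * (PMF.pure y) y = K x y
        rw [PMF.pure_apply]
        simp
      · show K x z * (PMF.pure z) y = 0
        rw [PMF.pure_apply, if_neg (fun h : y = z => hz h.symm), mul_zero]
    have h2 : hyp K y 1 x = K x y + sNe K y (fun _ => 0) x := rfl
    rw [h1, h2, sNe_zero, add_zero]
  | succ n ih =>
    intro x
    rw [stepPMF_succ_apply]
    rw [split_Ky (y := y) (fun z => stepPMF K (n+1) z y) x]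
    show K x y * stepPMF K (n+1) y y + sNe K y (fun z => stepPMF K (n+1) z y) x
      ≤ K x y + sNe K y (hyp K y (n+1)) x
    exact add_le_add
      (le_trans (mul_le_mul_right (PMF.coe_le_one _ _) _) (by rw [mul_one]))
      (sNe_mono (fun z _ => ih z) x)

lemma exists_step_pos (hirr : IrreducibleChain K) (b : S) :
    ∃ n, 0 < stepPMF K (n+1) b y := by
  obtain ⟨n, hn⟩ := hirr b y
  cases n with
  | succ m => exact ⟨m, hn⟩
  | zero =>
    have hb : y = b := by
      by_contra h
      have : stepPMF K 0 b y = 0 := by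
        show (PMF.pure b) y = 0
        rw [PMF.pure_apply, if_neg h]
      rw [this] at hn
      exact lt_irrefl 0 hn
    subst hb
    obtain ⟨z, hz⟩ := (K y).support_nonempty
    rw [PMF.mem_support_iff] at hz
    obtain ⟨m, hm⟩ := hirr z y
    refine ⟨m, ?_⟩
    rw [stepPMF_succ_apply]
    calc (0:ℝ≥0∞) < K y z * stepPMF K m z y := ENNReal.mul_pos hz hm.ne'
      _ ≤ ∑' w, K y w * stepPMF K m w y := ENNReal.le_tsum z

lemma qa_lt_one (hyB : y ∈ Bf) (hirr : IrreducibleChain K) (b : S) :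
    ∃ n, qa K Bf y (n+1) b < 1 := by
  obtain ⟨n, hn⟩ := exists_step_pos hirr b
  refine ⟨n, ?_⟩
  have h1 : qa K Bf y (n+1) b + stepPMF K (n+1) b y ≤ 1 := by
    calc qa K Bf y (n+1) b + stepPMF K (n+1) b y
        ≤ qa K Bf y (n+1) b + py K Bf y (n+1) b :=
          add_le_add_right (le_trans (step_le_hyp n b) (hyp_le_py hyB (n+1) b)) _
      _ ≤ 1 := qa_add_py hyB (n+1) b
  have hne : qa K Bf y (n+1) b ≠ ⊤ :=
    (lt_of_le_of_lt (qa_le_one _ _) ENNReal.one_lt_top).ne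
  exact lt_of_lt_of_le (ENNReal.lt_add_right hne hn.ne') h1

lemma exists_unif (hyB : y ∈ Bf) (hirr : IrreducibleChain K) :
    ∃ m : ℕ, 0 < m ∧ ∃ δ : ℝ≥0∞, δ < 1 ∧ ∀ b ∈ Bf, qa K Bf y m b ≤ δ := by
  choose nf hnf using qa_lt_one hyB hirr
  refine ⟨(Bf.sup fun b => nf b + 1) + 1, Nat.succ_pos _,
    Bf.sup (fun b => qa K Bf y ((Bf.sup fun b => nf b + 1) + 1) b), ?_, ?_⟩
  · refine (Finset.sup_lt_iff (by norm_num : (0:ℝ≥0∞) < 1)).2 fun b hb => ?_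
    refine lt_of_le_of_lt (qa_anti ?_ b) (hnf b)
    calc nf b + 1 ≤ Bf.sup fun b => nf b + 1 := Finset.le_sup (f := fun b => nf b + 1) hb
      _ ≤ _ := Nat.le_succ _
  · intro b hb
    exact Finset.le_sup hb

lemma qa_geom {m : ℕ} {δ : ℝ≥0∞} (hδ : ∀ b ∈ Bf, qa K Bf y m b ≤ δ) :
    ∀ j, ∀ b ∈ Bf, qa K Bf y (j + m) b ≤ δ * qa K Bf y j b := by
  intro j
  induction j with
  | zero =>
    intro b hb
    rw [zero_add]
    calc qa K Bf y m b ≤ δ := hδ b hb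
      _ = δ * qa K Bf y 0 b := (mul_one δ).symm
  | succ j ih =>
    intro b hb
    have hidx : j + 1 + m = (j + m) + 1 := by omega
    rw [hidx]
    show (∑ c ∈ Bf.erase y, hq K Bf b c * qa K Bf y (j + m) c)
        ≤ δ * qa K Bf y (j+1) b
    calc (∑ c ∈ Bf.erase y, hq K Bf b c * qa K Bf y (j + m) c)
        ≤ ∑ c ∈ Bf.erase y, hq K Bf b c * (δ * qa K Bf y j c) :=
          Finset.sum_le_sum fun c hc =>
            mul_le_mul_right (ih c (Finset.mem_of_mem_erase hc)) _
      _ = δ * ∑ c ∈ Bf.erase y, hq K Bf b c * qa K Bf y j c := by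
          rw [Finset.mul_sum]
          exact Finset.sum_congr rfl fun c _ => by ring
      _ = δ * qa K Bf y (j+1) b := rfl

lemma qa_pow {m : ℕ} {δ : ℝ≥0∞} (hδ : ∀ b ∈ Bf, qa K Bf y m b ≤ δ) :
    ∀ i, ∀ b ∈ Bf, qa K Bf y (i * m) b ≤ δ ^ i := by
  intro i
  induction i with
  | zero => intro b _; simp [qa]
  | succ i ih =>
    intro b hb
    have hidx : (i + 1) * m = i * m + m := by ring
    rw [hidx]
    calc qa K Bf y (i * m + m) b ≤ δ * qa K Bf y (i * m) b := qa_geom hδ (i * m) b hb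
      _ ≤ δ * δ ^ i := mul_le_mul_right (ih b hb) _
      _ = δ ^ (i + 1) := by ring

lemma kk_fin (hyB : y ∈ Bf) (hirr : IrreducibleChain K) (b : S) (hb : b ∈ Bf) :
    kk K Bf y b < ⊤ := by
  obtain ⟨m, hm, δ, hδ1, hδ⟩ := exists_unif hyB hirr
  haveI : NeZero m := ⟨hm.ne'⟩
  have key : ∀ p : ℕ × Fin m, qa K Bf y ((Nat.divModEquiv m).symm p) b ≤ δ ^ p.1 := by
    intro p
    set i := (Nat.divModEquiv m).symm p with hi
    have hp : (Nat.divModEquiv m) i = p := (Nat.divModEquiv m).apply_symm_apply p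
    have h1 : p.1 = i / m := by rw [← hp]; rfl
    have h2 : p.1 * m ≤ i := by rw [h1]; exact Nat.div_mul_le_self i m
    calc qa K Bf y i b ≤ qa K Bf y (p.1 * m) b := qa_anti h2 b
      _ ≤ δ ^ p.1 := qa_pow hδ p.1 b hb
  have h3 : kk K Bf y b = ∑' p : ℕ × Fin m, qa K Bf y ((Nat.divModEquiv m).symm p) b := by
    unfold kk
    exact (((Nat.divModEquiv m).symm).tsum_eq (fun i => qa K Bf y i b)).symm
  have h4 : (∑' p : ℕ × Fin m, (δ ^ p.1 : ℝ≥0∞)) = (m : ℝ≥0∞) * (1 - δ)⁻¹ := by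
    calc (∑' p : ℕ × Fin m, (δ ^ p.1 : ℝ≥0∞))
        = ∑' q : ℕ, ∑' _ : Fin m, (δ ^ q : ℝ≥0∞) :=
          ENNReal.tsum_prod (f := fun q _ => δ ^ q)
      _ = ∑' q : ℕ, (m : ℝ≥0∞) * δ ^ q := by
          congr 1; funext q
          rw [tsum_fintype]
          simp [Finset.sum_const, Finset.card_univ, nsmul_eq_mul]
      _ = (m : ℝ≥0∞) * ∑' q, δ ^ q := ENNReal.tsum_mul_left
      _ = (m : ℝ≥0∞) * (1 - δ)⁻¹ := by rw [ENNReal.tsum_geometric]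
  calc kk K Bf y b = ∑' p : ℕ × Fin m, qa K Bf y ((Nat.divModEquiv m).symm p) b := h3
    _ ≤ ∑' p : ℕ × Fin m, (δ ^ p.1 : ℝ≥0∞) := ENNReal.tsum_le_tsum key
    _ = (m : ℝ≥0∞) * (1 - δ)⁻¹ := h4
    _ < ⊤ := ENNReal.mul_lt_top (ENNReal.natCast_ne_top m).lt_top
        (ENNReal.inv_lt_top.2 (tsub_pos_of_lt hδ1))

end Irred

section Lyap

variable (K : S → PMF S) (Bf : Finset S) (y : S)

/-- hitting value of the induced-chain Lyapunov function -/
noncomputable def kap0 (b : S) : ℝ≥0∞ := if b = y then 0 else kk K Bf y b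

/-- harmonic extension of `kap0` off `Bf` -/
noncomputable def kap (x : S) : ℝ≥0∞ :=
  if x ∈ Bf then kap0 K Bf y x else ∑ c ∈ Bf, hq K Bf x c * kap0 K Bf y c

/-- the global Lyapunov function for returns to `y` -/
noncomputable def WW (Mv : ℝ≥0∞) (x : S) : ℝ≥0∞ :=
  Mv * kap K Bf y x + (if x ∈ Bf then 0 else Gf K Bf x)

/-- expected time of avoiding `y` -/
noncomputable def Hy (x : S) : ℝ≥0∞ := ∑' n, ay K y n x

variable {K} {Bf} {y}

lemma Ksum_kap (x : S) :
    ∑' z, K x z * kap K Bf y z = ∑ c ∈ Bf, hq K Bf x c * kap0 K Bf y c := by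
  calc ∑' z, K x z * kap K Bf y z
      = (∑ c ∈ Bf, K x c * kap K Bf y c) + sOut K Bf (kap K Bf y) x := split_K _ x
    _ = (∑ c ∈ Bf, K x c * kap0 K Bf y c)
        + sOut K Bf (fun z => ∑ c ∈ Bf, hq K Bf z c * kap0 K Bf y c) x := by
        congr 1
        · exact Finset.sum_congr rfl fun c hc => by rw [kap, if_pos hc]
        · exact sOut_congr (fun z hz => by rw [kap, if_neg hz]) x
    _ = (∑ c ∈ Bf, K x c * kap0 K Bf y c)
        + ∑ c ∈ Bf, sOut K Bf (fun z => hq K Bf z c) x * kap0 K Bf y c := by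
        rw [sOut_finsum]
        congr 1
        exact Finset.sum_congr rfl fun c _ => sOut_mul_right _ _ x
    _ = ∑ c ∈ Bf, (K x c + sOut K Bf (fun z => hq K Bf z c) x) * kap0 K Bf y c := by
        rw [← Finset.sum_add_distrib]
        exact Finset.sum_congr rfl fun c _ => (add_mul _ _ _).symm
    _ = ∑ c ∈ Bf, hq K Bf x c * kap0 K Bf y c :=
        Finset.sum_congr rfl fun c _ => by rw [← hq_identity]

lemma kap_off {x : S} (hx : x ∉ Bf) : kap K Bf y x = ∑' z, K x z * kap K Bf y z := by
  rw [Ksum_kap, kap, if_neg hx]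

lemma kapBf (hyB : y ∈ Bf) {b : S} (hb : b ∈ Bf) :
    1 + ∑' z, K b z * kap K Bf y z = kk K Bf y b := by
  rw [Ksum_kap]
  have h1 : (∑ c ∈ Bf, hq K Bf b c * kap0 K Bf y c)
      = ∑ c ∈ Bf.erase y, hq K Bf b c * kk K Bf y c := by
    rw [← Finset.add_sum_erase Bf _ hyB]
    rw [kap0, if_pos rfl, mul_zero, zero_add]
    exact Finset.sum_congr rfl fun c hc => by
      rw [kap0, if_neg (Finset.ne_of_mem_erase hc)]
  rw [h1, ← kk_identity]

lemma Ksum_W (Mv : ℝ≥0∞) (x : S) :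
    ∑' z, K x z * WW K Bf y Mv z
      = Mv * (∑' z, K x z * kap K Bf y z) + sOut K Bf (Gf K Bf) x := by
  calc ∑' z, K x z * WW K Bf y Mv z
      = ∑' z, (K x z * (Mv * kap K Bf y z)
          + K x z * (if z ∈ Bf then 0 else Gf K Bf z)) := by
        congr 1; funext z; rw [WW, mul_add]
    _ = (∑' z, K x z * (Mv * kap K Bf y z))
        + ∑' z, K x z * (if z ∈ Bf then 0 else Gf K Bf z) := ENNReal.tsum_add
    _ = Mv * (∑' z, K x z * kap K Bf y z) + sOut K Bf (Gf K Bf) x := by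
        congr 1
        · rw [← ENNReal.tsum_mul_left]
          congr 1; funext z; ring
        · rw [sOut]
          congr 1; funext z
          by_cases hz : z ∈ Bf <;> simp [hz]

lemma W_drift (hyB : y ∈ Bf) {Mv : ℝ≥0∞} (hM1 : 1 ≤ Mv)
    (hMG : ∀ b ∈ Bf, Gf K Bf b ≤ Mv) {x : S} (hx : x ≠ y) :
    1 + sNe K y (WW K Bf y Mv) x ≤ WW K Bf y Mv x := by
  have hb : 1 + sNe K y (WW K Bf y Mv) x
      ≤ 1 + (Mv * (∑' z, K x z * kap K Bf y z) + sOut K Bf (Gf K Bf) x) := by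
    refine add_le_add_right ?_ 1
    rw [← Ksum_W]
    exact sNe_le_tsum _ x
  by_cases hxB : x ∈ Bf
  · -- x in Bf, x ≠ y
    have hkk : 1 + (∑' z, K x z * kap K Bf y z) = kk K Bf y x := kapBf hyB hxB
    have hW : WW K Bf y Mv x = Mv * kk K Bf y x := by
      rw [WW, if_pos hxB, add_zero, kap, if_pos hxB, kap0, if_neg hx]
    refine le_trans hb ?_
    rw [hW, ← hkk, mul_add, mul_one]
    calc 1 + (Mv * (∑' z, K x z * kap K Bf y z) + sOut K Bf (Gf K Bf) x)
        = (1 + sOut K Bf (Gf K Bf) x) + Mv * (∑' z, K x z * kap K Bf y z) := by ring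
      _ = Gf K Bf x + Mv * (∑' z, K x z * kap K Bf y z) := by rw [← Gf_identity]
      _ ≤ Mv + Mv * (∑' z, K x z * kap K Bf y z) := add_le_add_left (hMG x hxB) _
  · -- x outside Bf
    have hW : WW K Bf y Mv x = Mv * kap K Bf y x + Gf K Bf x := by
      rw [WW, if_neg hxB]
    refine le_trans hb ?_
    rw [hW, kap_off hxB, Gf_identity]
    ring_nf
    exact le_rfl

lemma W_ge_one (hyB : y ∈ Bf) {Mv : ℝ≥0∞} (hM1 : 1 ≤ Mv)
    (hMG : ∀ b ∈ Bf, Gf K Bf b ≤ Mv) {x : S} (hx : x ≠ y) :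
    1 ≤ WW K Bf y Mv x :=
  le_trans le_self_add (W_drift hyB hM1 hMG hx)

lemma ay_partial (hyB : y ∈ Bf) {Mv : ℝ≥0∞} (hM1 : 1 ≤ Mv)
    (hMG : ∀ b ∈ Bf, Gf K Bf b ≤ Mv) :
    ∀ n, ∀ x, x ≠ y → (∑ k ∈ Finset.range (n+1), ay K y k x) ≤ WW K Bf y Mv x := by
  intro n
  induction n with
  | zero =>
    intro x hx
    simpa [ay] using W_ge_one hyB hM1 hMG hx
  | succ n ih =>
    intro x hx
    rw [Finset.sum_range_succ']
    have h1 : (∑ k ∈ Finset.range (n+1), ay K y (k+1) x)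
        = sNe K y (fun z => ∑ k ∈ Finset.range (n+1), ay K y k z) x := by
      rw [sNe_finsum]
      rfl
    calc (∑ k ∈ Finset.range (n+1), ay K y (k+1) x) + ay K y 0 x
        = 1 + sNe K y (fun z => ∑ k ∈ Finset.range (n+1), ay K y k z) x := by
          rw [h1, add_comm]
          rfl
      _ ≤ 1 + sNe K y (WW K Bf y Mv) x := by
          refine add_le_add_right (sNe_mono (fun z hz => ih z hz) x) 1
      _ ≤ WW K Bf y Mv x := W_drift hyB hM1 hMG hx

lemma Hy_le_W (hyB : y ∈ Bf) {Mv : ℝ≥0∞} (hM1 : 1 ≤ Mv)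
    (hMG : ∀ b ∈ Bf, Gf K Bf b ≤ Mv) {x : S} (hx : x ≠ y) :
    Hy K y x ≤ WW K Bf y Mv x := by
  rw [Hy, ENNReal.tsum_eq_iSup_nat]
  refine iSup_le fun N => ?_
  cases N with
  | zero => simp
  | succ n => exact ay_partial hyB hM1 hMG n x hx

lemma Hy_rec (x : S) : Hy K y x = 1 + sNe K y (Hy K y) x := by
  rw [Hy, tsum_shift]
  congr 1
  calc ∑' n, ay K y (n+1) x = ∑' n, sNe K y (ay K y n) x := rfl
    _ = sNe K y (fun z => ∑' n, ay K y n z) x := (sNe_tsum _ x).symm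
    _ = sNe K y (Hy K y) x := rfl

end Lyap

section Final

variable {K : S → PMF S} {Bf : Finset S} {y : S}

lemma fh_partial : ∀ N x, (∑ j ∈ Finset.range N, firstHit K y (j+1) x) ≤ 1 := by
  intro N
  induction N with
  | zero => intro x; simp
  | succ N ih =>
    intro x
    rw [Finset.sum_range_succ']
    have h1 : (∑ j ∈ Finset.range N, firstHit K y (j+1+1) x)
        = sNe K y (fun z => ∑ j ∈ Finset.range N, firstHit K y (j+1) z) x := by
      rw [sNe_finsum]
      rfl
    calc (∑ j ∈ Finset.range N, firstHit K y (j+1+1) x) + firstHit K y (0+1) x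
        = K x y + sNe K y (fun z => ∑ j ∈ Finset.range N, firstHit K y (j+1) z) x := by
          rw [h1, add_comm]
          rfl
      _ ≤ K x y + sNe K y (fun _ => 1) x :=
          add_le_add_right (sNe_mono (fun z _ => ih z) x) _
      _ = 1 := sNe_one x

lemma fh_tail : ∀ n x, (∑' j, firstHit K y (n+1+j) x) ≤ ay K y n x := by
  intro n
  induction n with
  | zero =>
    intro x
    show (∑' j, firstHit K y (0+1+j) x) ≤ 1
    rw [ENNReal.tsum_eq_iSup_nat]
    refine iSup_le fun N => ?_
    calc (∑ j ∈ Finset.range N, firstHit K y (0+1+j) x)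
        = ∑ j ∈ Finset.range N, firstHit K y (j+1) x :=
          Finset.sum_congr rfl fun j _ => by rw [show 0+1+j = j+1 by omega]
      _ ≤ 1 := fh_partial N x
  | succ n ih =>
    intro x
    have h1 : ∀ j, firstHit K y (n+1+1+j) x = sNe K y (firstHit K y (n+1+j)) x := by
      intro j
      rw [show n+1+1+j = (n+j)+2 by omega, show n+1+j = (n+j)+1 by omega]
      rfl
    calc (∑' j, firstHit K y (n+1+1+j) x)
        = ∑' j, sNe K y (firstHit K y (n+1+j)) x := by
          congr 1; funext j; exact h1 j
      _ = sNe K y (fun z => ∑' j, firstHit K y (n+1+j) z) x := (sNe_tsum _ x).symm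
      _ ≤ sNe K y (ay K y n) x := sNe_mono (fun z _ => ih z) x
      _ = ay K y (n+1) x := rfl

lemma sum_mul_le_tails (f : ℕ → ℝ≥0∞) :
    (∑' (k : ℕ), (k : ℝ≥0∞) * f k) ≤ ∑' n, ∑' j, f (n+1+j) := by
  rw [ENNReal.tsum_eq_iSup_nat]
  refine iSup_le fun N => ?_
  have key : (∑ k ∈ Finset.range N, (k : ℕ) * f k)
      = ∑ n ∈ Finset.range N, ∑ k ∈ Finset.Ico (n+1) N, f k := by
    have h1 : ∀ k : ℕ, (k : ℝ≥0∞) * f k = ∑ _n ∈ Finset.range k, f k := by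
      intro k
      rw [Finset.sum_const, Finset.card_range, nsmul_eq_mul]
    rw [Finset.sum_congr rfl fun k _ => h1 k]
    refine Finset.sum_comm' ?_
    intro k n
    simp only [Finset.mem_range, Finset.mem_Ico]
    omega
  rw [key]
  refine le_trans (Finset.sum_le_sum fun n _ => ?_) (ENNReal.sum_le_tsum _)
  rw [Finset.sum_Ico_eq_sum_range]
  exact ENNReal.sum_le_tsum _

lemma expected_return_le (hyB : y ∈ Bf) {Mv : ℝ≥0∞} (hM1 : 1 ≤ Mv)
    (hMG : ∀ b ∈ Bf, Gf K Bf b ≤ Mv) :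
    (∑' (n : ℕ), (n : ℝ≥0∞) * firstHit K y n y) ≤ 1 + sNe K y (WW K Bf y Mv) y := by
  calc (∑' (n : ℕ), (n : ℝ≥0∞) * firstHit K y n y)
      ≤ ∑' n, ∑' j, firstHit K y (n+1+j) y := sum_mul_le_tails _
    _ ≤ ∑' n, ay K y n y := ENNReal.tsum_le_tsum fun n => fh_tail n y
    _ = Hy K y y := rfl
    _ = 1 + sNe K y (Hy K y) y := Hy_rec y
    _ ≤ 1 + sNe K y (WW K Bf y Mv) y :=
        add_le_add_right (sNe_mono (fun z hz => Hy_le_W hyB hM1 hMG hz) y) 1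

theorem master (K : S → PMF S) (Bf : Finset S) (y : S) (hyB : y ∈ Bf)
    (hirr : IrreducibleChain K)
    (V : S → ℝ≥0∞) (hVfin : ∀ x, V x ≠ ⊤) (e CA : ℝ≥0∞)
    (he0 : e ≠ 0) (heT : e ≠ ⊤) (hCA : CA ≠ ⊤)
    (hout : ∀ x ∉ Bf, (∑' z, K x z * V z) + e ≤ V x)
    (hall : ∀ x, (∑' z, K x z * V z) ≤ V x + CA) :
    (∑' (n : ℕ), (n : ℝ≥0∞) * firstHit K y n y) < ⊤ := by
  have hGfin : ∀ x, Gf K Bf x < ⊤ :=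
    fun x => Gf_fin hout he0 heT hCA hall x (hVfin x)
  set Mv : ℝ≥0∞ := 1 + Bf.sup (Gf K Bf) with hMv
  have hM1 : 1 ≤ Mv := le_self_add
  have hMG : ∀ b ∈ Bf, Gf K Bf b ≤ Mv :=
    fun b hb => le_trans (Finset.le_sup hb) le_add_self
  have hMfin : Mv ≠ ⊤ := by
    rw [hMv]
    refine (ENNReal.add_lt_top.2 ⟨ENNReal.one_lt_top, ?_⟩).ne
    exact (Finset.sup_lt_iff (by simp : (⊥:ℝ≥0∞) < ⊤)).2 fun b _ => hGfin b
  refine lt_of_le_of_lt (expected_return_le hyB hM1 hMG) ?_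
  -- finiteness of the bound at y
  have hT : (∑' z, K y z * kap K Bf y z) ≤ kk K Bf y y := by
    rw [← kapBf hyB hyB]
    exact le_add_self
  have hkkfin : kk K Bf y y < ⊤ := kk_fin hyB hirr y hyB
  have hsOut : sOut K Bf (Gf K Bf) y ≤ Gf K Bf y := by
    conv_rhs => rw [Gf_identity]
    exact le_add_self
  have h2 : sNe K y (WW K Bf y Mv) y < ⊤ := by
    calc sNe K y (WW K Bf y Mv) y
        ≤ ∑' z, K y z * WW K Bf y Mv z := sNe_le_tsum _ y
      _ = Mv * (∑' z, K y z * kap K Bf y z) + sOut K Bf (Gf K Bf) y := Ksum_W Mv y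
      _ ≤ Mv * kk K Bf y y + Gf K Bf y := add_le_add (mul_le_mul_right hT _) hsOut
      _ < ⊤ := ENNReal.add_lt_top.2
          ⟨ENNReal.mul_lt_top hMfin.lt_top hkkfin, hGfin y⟩
  exact ENNReal.add_lt_top.2 ⟨ENNReal.one_lt_top, h2⟩

end Final

end FosterAux


/-- Foster–Lyapunov criterion: let `(X_k)` be an irreducible Markov chain on a
countable state space `S` with kernel `K`. If there are `V : S → ℝ≥0`, a finite set `B ⊆ S`,
and constants `ε > 0`, `A < ∞` with conditional drift
`E[V(X_{k+1}) - V(X_k) | X_k = x] ≤ -ε` for `x ∉ B` and `≤ A` for `x ∈ B`, then the chain is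
positive recurrent. -/
theorem stmt_3 {S : Type*} [Countable S] [DecidableEq S] [Nonempty S]
    (K : S → PMF S) (hirr : IrreducibleChain K)
    (V : S → NNReal) (B : Set S) (hBfin : B.Finite)
    (ε A : ℝ) (hε : 0 < ε)
    (hdrift_out : ∀ x ∉ B,
      (∑' z : S, K x z * (V z : ℝ≥0∞)) + ENNReal.ofReal ε ≤ (V x : ℝ≥0∞))
    (hdrift_in : ∀ x ∈ B,
      (∑' z : S, K x z * (V z : ℝ≥0∞)) ≤ (V x : ℝ≥0∞) + ENNReal.ofReal A) :
    PositiveRecurrent K := by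
  intro y
  classical
  set Bf : Finset S := insert y hBfin.toFinset with hBf
  have hyB : y ∈ Bf := Finset.mem_insert_self y _
  have hBsub : ∀ x, x ∈ B → x ∈ Bf :=
    fun x hx => Finset.mem_insert_of_mem (hBfin.mem_toFinset.2 hx)
  have he0 : ENNReal.ofReal ε ≠ 0 := (ENNReal.ofReal_pos.2 hε).ne'
  have hout : ∀ x ∉ Bf, (∑' z : S, K x z * (V z : ℝ≥0∞)) + ENNReal.ofReal ε
      ≤ (V x : ℝ≥0∞) :=
    fun x hx => hdrift_out x (fun hxB => hx (hBsub x hxB))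
  have hall : ∀ x, (∑' z : S, K x z * (V z : ℝ≥0∞))
      ≤ (V x : ℝ≥0∞) + ENNReal.ofReal A := by
    intro x
    by_cases hx : x ∈ B
    · exact hdrift_in x hx
    · exact le_trans (le_trans le_self_add (hdrift_out x hx)) le_self_add
  exact FosterAux.master K Bf y hyB hirr (fun x => (V x : ℝ≥0∞))
    (fun x => ENNReal.coe_ne_top) (ENNReal.ofReal ε) (ENNReal.ofReal A)
    he0 ENNReal.ofReal_ne_top ENNReal.ofReal_ne_top hout hall
end

section
/- Gradient projection convergence: let f : ℝⁿ → ℝ be continuously differentiable with L-Lipschitz gradient, X ⊆ ℝⁿ closed and convex, and consider iterates x_{k+1} = P_X(x_k − γ ∇f(x_k)) with constant step size γ ∈ (0, 2/L), where P_X is the metric projection onto X. Then every limit point x̄ of (x_k) satisfies the first-order optimality condition ∇f(x̄)ᵀ(x − x̄) ≥ 0 for all x ∈ X. -/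
open Filter

open Filter

variable {E : Type*} [NormedAddCommGroup E] [InnerProductSpace ℝ E]

/-- Variational inequality for a metric projection onto a convex set. -/
lemma aux_vi {X : Set E} (hXconv : Convex ℝ X)
    (PX : E → E) (hPXmem : ∀ y, PX y ∈ X)
    (hPXproj : ∀ y, ∀ z ∈ X, ‖y - PX y‖ ≤ ‖y - z‖) :
    ∀ y, ∀ z ∈ X, inner (𝕜 := ℝ) (y - PX y) (z - PX y) ≤ 0 := by
  intro y z hz
  set p := PX y with hp
  by_contra h
  push_neg at h
  have key : ∀ t : ℝ, 0 < t → t ≤ 1 →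
      2 * inner (𝕜 := ℝ) (y - p) (z - p) ≤ t * ‖z - p‖ ^ 2 := by
    intro t ht0 ht1
    have hw : p + t • (z - p) ∈ X := by
      have h2 := hXconv (hPXmem y) hz (a := 1 - t) (b := t) (by linarith) ht0.le (by ring)
      have : (1 - t) • p + t • z = p + t • (z - p) := by
        rw [smul_sub]; module
      rwa [this] at h2
    have hle := hPXproj y _ hw
    have hsq : ‖y - p‖ ^ 2 ≤ ‖y - (p + t • (z - p))‖ ^ 2 := by
      have := norm_nonneg (y - p)
      nlinarith [hle]
    have hrw : y - (p + t • (z - p)) = (y - p) - t • (z - p) := by abel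
    have hexp : ‖(y - p) - t • (z - p)‖ ^ 2
        = ‖y - p‖ ^ 2 - 2 * (t * inner (𝕜 := ℝ) (y - p) (z - p)) + t ^ 2 * ‖z - p‖ ^ 2 := by
      rw [norm_sub_sq_real, real_inner_smul_right, norm_smul, Real.norm_eq_abs,
        abs_of_pos ht0, mul_pow]
    rw [hrw, hexp] at hsq
    nlinarith [hsq]
  rcases eq_or_lt_of_le (sq_nonneg ‖z - p‖) with hc | hc
  · have := key 1 one_pos le_rfl
    rw [← hc] at this
    linarith
  · set c := ‖z - p‖ ^ 2
    set s := inner (𝕜 := ℝ) (y - p) (z - p)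
    have ht0 : 0 < min 1 (s / c) := lt_min one_pos (div_pos h hc)
    have := key _ ht0 (min_le_left _ _)
    have h2 : min 1 (s / c) * c ≤ s := by
      rw [← le_div_iff₀ hc]
      exact min_le_right _ _
    linarith
variable {E : Type*} [NormedAddCommGroup E] [InnerProductSpace ℝ E]

lemma aux_nonexp {X : Set E} (PX : E → E) (hPXmem : ∀ y, PX y ∈ X)
    (hvi : ∀ y, ∀ z ∈ X, inner (𝕜 := ℝ) (y - PX y) (z - PX y) ≤ 0) :
    ∀ u v, ‖PX u - PX v‖ ≤ ‖u - v‖ := by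
  intro u v
  have h1 := hvi u (PX v) (hPXmem v)
  have h2 := hvi v (PX u) (hPXmem u)
  have hcs : inner (𝕜 := ℝ) (u - v) (PX u - PX v) ≤ ‖u - v‖ * ‖PX u - PX v‖ :=
    real_inner_le_norm _ _
  have hsq : ‖PX u - PX v‖ ^ 2 ≤ inner (𝕜 := ℝ) (u - v) (PX u - PX v) := by
    have e1 : (u - PX u) - (v - PX v) = (u - v) - (PX u - PX v) := by abel
    have e2 : inner (𝕜 := ℝ) ((u - PX u) - (v - PX v)) (PX v - PX u) ≤ 0 := by
      rw [inner_sub_left]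
      have h2' : inner (𝕜 := ℝ) (v - PX v) (PX v - PX u) =
          - inner (𝕜 := ℝ) (v - PX v) (PX u - PX v) := by
        rw [← inner_neg_right]; congr 1; abel
      linarith [h1, h2, h2' ▸ (neg_nonneg.mpr h2)]
    rw [e1, inner_sub_left] at e2
    have e3 : (PX v - PX u) = -(PX u - PX v) := by abel
    rw [e3, inner_neg_right, inner_neg_right, real_inner_self_eq_norm_sq] at e2
    linarith
  rcases eq_or_lt_of_le (norm_nonneg (PX u - PX v)) with h0 | h0
  · rw [← h0]; exact norm_nonneg _
  · nlinarith [hsq, hcs]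

/-- Descent lemma. -/
lemma aux_descent [CompleteSpace E] (f : E → ℝ) (g : E → E) (hgrad : ∀ x, HasGradientAt f (g x) x)
    (L : ℝ) (hL : 0 < L) (hLip : ∀ x y, ‖g x - g y‖ ≤ L * ‖x - y‖) (a b : E) :
    f b ≤ f a + inner (𝕜 := ℝ) (g a) (b - a) + L / 2 * ‖b - a‖ ^ 2 := by
  set d := b - a with hd
  set ψ : ℝ → ℝ := fun t =>
    f (a + t • d) - t * inner (𝕜 := ℝ) (g a) d - L / 2 * t ^ 2 * ‖d‖ ^ 2 with hψ
  have hder : ∀ t : ℝ, HasDerivAt ψ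
      (inner (𝕜 := ℝ) (g (a + t • d)) d - inner (𝕜 := ℝ) (g a) d - L * t * ‖d‖ ^ 2) t := by
    intro t
    have hc : HasDerivAt (fun t : ℝ => a + t • d) d t := by
      simpa using ((hasDerivAt_id t).smul_const d).const_add a
    have hf : HasDerivAt (fun t : ℝ => f (a + t • d))
        (inner (𝕜 := ℝ) (g (a + t • d)) d) t := by
      have := ((hgrad (a + t • d)).hasFDerivAt.comp_hasDerivAt t hc)
      simp at this
      exact this
    have h2 : HasDerivAt (fun t : ℝ => t * inner (𝕜 := ℝ) (g a) d)
        (inner (𝕜 := ℝ) (g a) d) t := by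
      simpa using (hasDerivAt_id t).mul_const (inner (𝕜 := ℝ) (g a) d)
    have h3 : HasDerivAt (fun t : ℝ => L / 2 * t ^ 2 * ‖d‖ ^ 2) (L * t * ‖d‖ ^ 2) t := by
      have := ((hasDerivAt_pow 2 t).const_mul (L / 2)).mul_const (‖d‖ ^ 2)
      have e : L * t * ‖d‖ ^ 2 = L / 2 * (((2:ℕ):ℝ) * t ^ (2 - 1)) * ‖d‖ ^ 2 := by
        rw [show (2:ℕ) - 1 = 1 from rfl]; push_cast; ring
      rw [e]; exact this
    exact (hf.sub h2).sub h3
  have hanti : AntitoneOn ψ (Set.Icc 0 1) := by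
    apply antitoneOn_of_deriv_nonpos (convex_Icc 0 1)
    · exact fun t _ => ((hder t).continuousAt).continuousWithinAt
    · exact fun t _ => ((hder t).differentiableAt).differentiableWithinAt
    · intro t ht
      rw [interior_Icc] at ht
      rw [(hder t).deriv]
      have hlip := hLip (a + t • d) a
      have hnorm : ‖a + t • d - a‖ = t * ‖d‖ := by
        rw [add_sub_cancel_left, norm_smul, Real.norm_eq_abs, abs_of_pos ht.1]
      rw [hnorm] at hlip
      have hinner : inner (𝕜 := ℝ) (g (a + t • d)) d - inner (𝕜 := ℝ) (g a) d
          ≤ L * (t * ‖d‖) * ‖d‖ := by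
        rw [← inner_sub_left]
        calc inner (𝕜 := ℝ) (g (a + t • d) - g a) d ≤ ‖g (a + t • d) - g a‖ * ‖d‖ :=
              real_inner_le_norm _ _
          _ ≤ L * (t * ‖d‖) * ‖d‖ := by
              apply mul_le_mul_of_nonneg_right hlip (norm_nonneg d)
      nlinarith [hinner]
  have h01 := hanti (Set.left_mem_Icc.mpr zero_le_one) (Set.right_mem_Icc.mpr zero_le_one)
    zero_le_one
  simp only [hψ, zero_smul, add_zero, one_smul, zero_mul, zero_pow, mul_zero, sub_zero,
    one_mul, one_pow, mul_one] at h01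
  have : a + d = b := by rw [hd]; abel
  rw [this] at h01
  linarith

/-- gradient projection convergence. Let `f : ℝⁿ → ℝ` be continuously
differentiable with `L`-Lipschitz gradient, `X` nonempty closed convex, `P_X` the metric
projection onto `X`, and `x_{k+1} = P_X (x_k - γ ∇f(x_k))` with constant step
`γ ∈ (0, 2/L)`. Then every limit point `x̄` of `(x_k)` satisfies
`⟪∇f(x̄), z - x̄⟫ ≥ 0` for all `z ∈ X`. -/
theorem stmt_16 {n : ℕ} (f : EuclideanSpace ℝ (Fin n) → ℝ)
    (g : EuclideanSpace ℝ (Fin n) → EuclideanSpace ℝ (Fin n))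
    (hgrad : ∀ x, HasGradientAt f (g x) x)
    (L : ℝ) (hL : 0 < L)
    (hLip : ∀ x y, ‖g x - g y‖ ≤ L * ‖x - y‖)
    (X : Set (EuclideanSpace ℝ (Fin n)))
    (hXne : X.Nonempty) (hXclosed : IsClosed X) (hXconv : Convex ℝ X)
    (PX : EuclideanSpace ℝ (Fin n) → EuclideanSpace ℝ (Fin n))
    (hPXmem : ∀ y, PX y ∈ X)
    (hPXproj : ∀ y, ∀ z ∈ X, ‖y - PX y‖ ≤ ‖y - z‖)
    (γ : ℝ) (hγ0 : 0 < γ) (hγ2 : γ < 2 / L)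
    (x : ℕ → EuclideanSpace ℝ (Fin n))
    (hiter : ∀ k, x (k + 1) = PX (x k - γ • g (x k)))
    (xbar : EuclideanSpace ℝ (Fin n))
    (hlimpt : ∃ φ : ℕ → ℕ, StrictMono φ ∧ Tendsto (x ∘ φ) atTop (nhds xbar)) :
    ∀ z ∈ X, 0 ≤ inner (𝕜 := ℝ) (g xbar) (z - xbar) := by

  obtain ⟨φ, hφ, hxφ⟩ := hlimpt
  have hvi := aux_vi hXconv PX hPXmem hPXproj
  have hnonexp := aux_nonexp PX hPXmem hvi
  have hdesc := aux_descent f g hgrad L hL hLip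
  -- continuity facts
  have hfc : Continuous f := by
    have : Differentiable ℝ f := fun v => (hgrad v).differentiableAt
    exact this.continuous
  have hgc : Continuous g := by
    have : LipschitzWith L.toNNReal g := by
      apply LipschitzWith.of_dist_le_mul
      intro u v
      rw [dist_eq_norm, dist_eq_norm, Real.coe_toNNReal L hL.le]
      exact hLip u v
    exact this.continuous
  have hPXc : Continuous PX := by
    have : LipschitzWith 1 PX := by
      apply LipschitzWith.of_dist_le_mul
      intro u v
      rw [dist_eq_norm, dist_eq_norm]
      simpa using hnonexp u v
    exact this.continuous
  set c : ℝ := 1 / γ - L / 2 with hc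
  have hcpos : 0 < c := by
    have h1 : γ * L < 2 := by
      have := (lt_div_iff₀ hL).mp hγ2
      linarith
    have h2 : L / 2 < 1 / γ := by
      rw [div_lt_div_iff₀ (by norm_num : (0:ℝ) < 2) hγ0]
      nlinarith
    rw [hc]; linarith
  set a : ℕ → ℝ := fun k => f (x (k + 1)) with ha
  -- the one-step decrease
  have hstep : ∀ k, f (x (k + 2)) ≤ f (x (k + 1)) - c * ‖x (k + 2) - x (k + 1)‖ ^ 2 := by
    intro k
    set G := g (x (k + 1)) with hG
    set d := x (k + 2) - x (k + 1) with hdd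
    have hmem : x (k + 1) ∈ X := by rw [hiter k]; exact hPXmem _
    have hVI := hvi (x (k + 1) - γ • G) (x (k + 1)) hmem
    have hPXval : PX (x (k + 1) - γ • G) = x (k + 2) := (hiter (k + 1)).symm
    rw [hPXval] at hVI
    have e1 : x (k + 1) - γ • G - x (k + 2) = -d - γ • G := by rw [hdd]; abel
    have e2 : x (k + 1) - x (k + 2) = -d := by rw [hdd]; abel
    rw [e1, e2] at hVI
    have expand : inner (𝕜 := ℝ) (-d - γ • G) (-d)
        = ‖d‖ ^ 2 + γ * inner (𝕜 := ℝ) G d := by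
      rw [inner_sub_left, inner_neg_neg, real_inner_self_eq_norm_sq,
        real_inner_smul_left, inner_neg_right]
      ring
    rw [expand] at hVI
    have hd1 := hdesc (x (k + 1)) (x (k + 2))
    rw [← hdd, ← hG] at hd1
    have hgd : ‖d‖ ^ 2 / γ ≤ -(inner (𝕜 := ℝ) G d) := by
      rw [div_le_iff₀ hγ0]
      nlinarith [hVI]
    have hdivγ : ‖d‖ ^ 2 / γ = 1 / γ * ‖d‖ ^ 2 := by ring
    rw [hdivγ] at hgd
    rw [hc]
    nlinarith [hd1, hgd]
  have hantistep : ∀ k, a (k + 1) ≤ a k := by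
    intro k
    have := hstep k
    nlinarith [sq_nonneg ‖x (k + 2) - x (k + 1)‖, hcpos, this]
  have hanti : Antitone a := antitone_nat_of_succ_le hantistep
  -- f along the subsequence tends to f xbar
  have hfφ : Tendsto (fun m => f (x (φ m))) atTop (nhds (f xbar)) :=
    (hfc.continuousAt.tendsto).comp hxφ
  -- lower bound : f xbar ≤ a k for every k
  have hφge : ∀ m, m ≤ φ m := fun m => hφ.le_apply
  have hlb : ∀ k, f xbar ≤ a k := by
    intro k
    apply le_of_tendsto hfφ
    filter_upwards [eventually_ge_atTop (k + 2)] with m hm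
    have h1 : k ≤ φ m - 1 := by have := hφge m; omega
    have h2 : φ m - 1 + 1 = φ m := by have := hφge m; omega
    have := hanti h1
    simpa only [ha, h2] using this
  -- a converges to its infimum
  have hbdd : BddBelow (Set.range a) := ⟨f xbar, by rintro _ ⟨k, rfl⟩; exact hlb k⟩
  have hconv : Tendsto a atTop (nhds (⨅ k, a k)) := tendsto_atTop_ciInf hanti hbdd
  -- identify the infimum with f xbar
  have hρtop : Tendsto (fun m => φ m - 1) atTop atTop := by
    rw [tendsto_atTop]
    intro b
    filter_upwards [eventually_ge_atTop (b + 1)] with m hm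
    have := hφge m; omega
  have hsub : Tendsto (fun m => a (φ m - 1)) atTop (nhds (⨅ k, a k)) := hconv.comp hρtop
  have hsub' : Tendsto (fun m => f (x (φ m))) atTop (nhds (⨅ k, a k)) := by
    apply hsub.congr'
    filter_upwards [eventually_ge_atTop 1] with m hm
    have h2 : φ m - 1 + 1 = φ m := by have := hφge m; omega
    simp only [ha, h2]
  have hinf : (⨅ k, a k) = f xbar := tendsto_nhds_unique hsub' hfφ
  rw [hinf] at hconv
  -- successive differences go to zero
  have hdiff : Tendsto (fun k => (a k - a (k + 1)) / c) atTop (nhds 0) := by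
    have h1 : Tendsto (fun k => a k - a (k + 1)) atTop (nhds (f xbar - f xbar)) :=
      hconv.sub (hconv.comp (tendsto_add_atTop_nat 1))
    rw [sub_self] at h1
    simpa using h1.div_const c
  have hD2 : Tendsto (fun k => ‖x (k + 2) - x (k + 1)‖ ^ 2) atTop (nhds 0) := by
    apply squeeze_zero (fun k => sq_nonneg _) _ hdiff
    intro k
    rw [le_div_iff₀ hcpos]
    have := hstep k
    simp only [ha] at this ⊢
    nlinarith [this]
  have hD : Tendsto (fun k => ‖x (k + 2) - x (k + 1)‖) atTop (nhds 0) := by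
    have h1 : Tendsto (fun k => Real.sqrt (‖x (k + 2) - x (k + 1)‖ ^ 2)) atTop
        (nhds (Real.sqrt 0)) := (Real.continuous_sqrt.tendsto 0).comp hD2
    rw [Real.sqrt_zero] at h1
    apply h1.congr
    intro k
    exact Real.sqrt_sq (norm_nonneg _)
  -- the shifted subsequence
  set ψ : ℕ → ℕ := fun m => φ (m + 1) with hψdef
  have hψge : ∀ m, 1 ≤ ψ m := fun m => le_trans (by omega) (hφge (m + 1))
  have hxψ : Tendsto (fun m => x (ψ m)) atTop (nhds xbar) :=
    hxφ.comp (tendsto_add_atTop_nat 1)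
  have hψρtop : Tendsto (fun m => ψ m - 1) atTop atTop := by
    rw [tendsto_atTop]
    intro b
    filter_upwards [eventually_ge_atTop (b + 1)] with m hm
    have := hφge (m + 1); simp only [hψdef]; omega
  have hgap : Tendsto (fun m => ‖x (ψ m + 1) - x (ψ m)‖) atTop (nhds 0) := by
    have h1 := hD.comp hψρtop
    apply h1.congr
    intro m
    have h2 : ψ m - 1 + 2 = ψ m + 1 := by have := hψge m; omega
    have h3 : ψ m - 1 + 1 = ψ m := by have := hψge m; omega
    simp only [Function.comp_apply, h2, h3]
  have hgapvec : Tendsto (fun m => x (ψ m + 1) - x (ψ m)) atTop (nhds 0) :=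
    tendsto_zero_iff_norm_tendsto_zero.mpr hgap
  have hxψ1 : Tendsto (fun m => x (ψ m + 1)) atTop (nhds xbar) := by
    have h1 := hgapvec.add hxψ
    rw [zero_add] at h1
    apply h1.congr
    intro m
    abel
  -- the map v ↦ PX (v - γ • g v) is continuous
  have hmapcont : Continuous fun v => PX (v - γ • g v) :=
    hPXc.comp (continuous_id.sub (hgc.const_smul γ))
  have hfixlim : Tendsto (fun m => PX (x (ψ m) - γ • g (x (ψ m)))) atTop
      (nhds (PX (xbar - γ • g xbar))) := (hmapcont.continuousAt.tendsto).comp hxψ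
  have heq : (fun m => x (ψ m + 1)) = fun m => PX (x (ψ m) - γ • g (x (ψ m))) := by
    funext m; exact hiter (ψ m)
  rw [heq] at hxψ1
  have hfix : PX (xbar - γ • g xbar) = xbar := tendsto_nhds_unique hfixlim hxψ1
  -- conclude via the variational inequality at xbar
  intro z hz
  have hVI := hvi (xbar - γ • g xbar) z hz
  rw [hfix] at hVI
  have e1 : xbar - γ • g xbar - xbar = -(γ • g xbar) := by abel
  rw [e1, inner_neg_left, real_inner_smul_left, neg_nonpos] at hVI
  by_contra h
  push_neg at h
  nlinarith [hVI, hγ0, h]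
end
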